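/- arXiv:2605.27982 — 2 statements merged into one kernel-verified Lean document; each statement's English description precedes it below -/
import Mathlib

section
/- The expected image-order of a random endomorphism of the symmetric group on n letters is asymptotic to n!: the sequence n ↦ ( Σ over all φ : Equiv.Perm (Fin n) →* Equiv.Perm (Fin n) of (Nat.card φ.range : ℝ) ) / ( (Nat.card (Equiv.Perm (Fin n) →* Equiv.Perm (Fin n))) · n! ) tends to 1 as n → ∞ (Filter.Tendsto along atTop to nhds 1). -/
/-!
For `n ≥ 5` a non-injective endomorphism of `Sₙ` has a nontrivial normal kernel, which therefore
contains `Aₙ`; the endomorphism then factors through the sign and is determined by the image of a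
transposition, an element `σ` with `σ ^ 2 = 1`. Such a `σ` satisfies `σ (σ a) = a`, which only
`2 (n - 1)!` permutations do, so at most `2 n! / n` endomorphisms are non-injective. Since the
center of `Sₙ` is trivial, the `n!` inner automorphisms are distinct. Hence a random endomorphism
is an automorphism, with image of order `n!`, with probability at least `n / (n + 2)`.
-/

open Equiv Function Finset

instance MonoidHom.instFinite {G H : Type*} [Monoid G] [Monoid H] [Finite G] [Finite H] :
    Finite (G →* H) :=
  FunLike.finite _

theorem MonoidHom.card_le_card_injective_of_center_eq_bot {G : Type*} [Group G] [Finite G]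
    (hG : Subgroup.center G = ⊥) : Nat.card G ≤ Nat.card {φ : (G →* G) // Injective φ} := by
  refine Nat.card_le_card_of_injective
    (fun g => ⟨(MulAut.conj g).toMonoidHom, (MulAut.conj g).injective⟩) fun g h hgh => ?_
  have hconj : MulAut.conj (h⁻¹ * g) = 1 := by
    rw [map_mul, map_inv, inv_mul_eq_one]
    exact MulEquiv.ext fun x => congr($(hgh).1 x).symm
  have hcenter : h⁻¹ * g ∈ Subgroup.center G := Subgroup.mem_center_iff.mpr fun x => by
    have := congr($hconj x)
    rw [MulAut.conj_apply, MulAut.one_apply, mul_inv_eq_iff_eq_mul] at this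
    exact this.symm
  rw [hG, Subgroup.mem_bot, inv_mul_eq_one] at hcenter
  exact hcenter.symm

noncomputable def expectedRangeFraction (G : Type*) [Group G] : ℝ :=
  (∑ᶠ φ : G →* G, (Nat.card φ.range : ℝ)) / (Nat.card (G →* G) * Nat.card G)

section

variable {G : Type*} [Group G] [Finite G]

theorem expectedRangeFraction_le_one : expectedRangeFraction G ≤ 1 := by
  have := Fintype.ofFinite (G →* G)
  have hS : ∑ φ : G →* G, (Nat.card φ.range : ℝ) ≤ ∑ _φ : G →* G, (Nat.card G : ℝ) :=
    sum_le_sum fun φ _ => by exact_mod_cast φ.range.card_le_card_group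
  rw [sum_const, card_univ, nsmul_eq_mul, ← Nat.card_eq_fintype_card] at hS
  rw [expectedRangeFraction, finsum_eq_sum_of_fintype]
  exact div_le_one_of_le₀ hS (by positivity)

theorem card_injective_div_le_expectedRangeFraction :
    (Nat.card {φ : (G →* G) // Injective φ} : ℝ) / Nat.card (G →* G) ≤
      expectedRangeFraction G := by
  classical
  have := Fintype.ofFinite (G →* G)
  have hN : (0 : ℝ) < Nat.card G := by simp [Nat.card_pos]
  have hS : (Nat.card {φ : (G →* G) // Injective φ} : ℝ) * Nat.card G ≤
      ∑ φ : G →* G, (Nat.card φ.range : ℝ) := calc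
    _ = ∑ φ ∈ univ.filter fun φ : G →* G => Injective φ, (Nat.card φ.range : ℝ) := by
      rw [sum_congr rfl fun φ hφ => by
        rw [← Nat.card_congr (MonoidHom.ofInjective (mem_filter.mp hφ).2).toEquiv]]
      simp [Nat.card_eq_fintype_card, Fintype.card_subtype]
    _ ≤ _ := sum_le_sum_of_subset_of_nonneg (filter_subset _ _) fun _ _ _ => by positivity
  rw [expectedRangeFraction, finsum_eq_sum_of_fintype, ← mul_div_mul_right _ _ hN.ne']
  gcongr

end

namespace Equiv.Perm

variable {α : Type*} [DecidableEq α] [Fintype α]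

section Counting

open scoped Nat

theorem card_forall_mem_apply_eq_self (s : Finset α) :
    Fintype.card {σ : Perm α // ∀ x ∈ s, σ x = x} = (Fintype.card α - #s)! := by
  rw [← Fintype.card_congr ((Perm.subtypeEquivSubtypePerm (· ∉ s)).trans
    (Equiv.subtypeEquivRight fun σ => by simp only [not_not])), Fintype.card_perm]
  simp

theorem card_apply_eq_and_apply_eq {a b : α} (hab : a ≠ b) :
    Fintype.card {σ : Perm α // σ a = b ∧ σ b = a} = (Fintype.card α - 2)! := by
  rw [← card_pair hab, ← card_forall_mem_apply_eq_self]
  refine Fintype.card_congr ((Equiv.mulLeft (swap a b)).subtypeEquiv fun σ => ?_)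
  simp [swap_apply_eq_iff]

theorem card_apply_apply_eq_self (a : α) :
    Fintype.card {σ : Perm α // σ (σ a) = a} =
      (Fintype.card α - 1)! + (Fintype.card α - 1) * (Fintype.card α - 2)! := by
  have fiber (b : α) : #{σ : Perm α | σ (σ a) = a ∧ σ a = b} =
      if b = a then (Fintype.card α - 1)! else (Fintype.card α - 2)! := by
    split_ifs with hb
    · subst hb
      rw [← card_singleton b, ← card_forall_mem_apply_eq_self, ← Fintype.card_subtype]
      exact Fintype.card_congr (Equiv.subtypeEquivRight fun σ => by aesop)
    · rw [← card_apply_eq_and_apply_eq (Ne.symm hb), ← Fintype.card_subtype]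
      exact Fintype.card_congr (Equiv.subtypeEquivRight fun σ => by aesop)
  rw [Fintype.card_subtype, card_eq_sum_card_fiberwise (f := fun σ => σ a) (t := univ)
    fun _ _ => mem_univ _]
  simp_rw [filter_filter, fiber]
  rw [sum_ite, sum_const, sum_const, filter_eq', filter_ne']
  simp

theorem card_sq_eq_one_mul_card_le :
    Fintype.card {σ : Perm α // σ ^ 2 = 1} * Fintype.card α ≤ 2 * (Fintype.card α)! := by
  cases isEmpty_or_nonempty α with
  | inl _ => simp
  | inr h =>
    obtain ⟨a⟩ := h
    have hinv : Fintype.card {σ : Perm α // σ ^ 2 = 1} ≤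
        Fintype.card {σ : Perm α // σ (σ a) = a} :=
      Fintype.card_subtype_mono _ _ fun σ hσ => by rw [← mul_apply, ← sq, hσ, one_apply]
    have hpos : 0 < Fintype.card α := Fintype.card_pos_iff.mpr ⟨a⟩
    refine (Nat.mul_le_mul_right _ (hinv.trans (card_apply_apply_eq_self a).le)).trans ?_
    generalize Fintype.card α = n at hpos ⊢
    rcases n with _ | _ | m
    · omega
    · simp
    · refine le_of_eq ?_
      simp only [add_tsub_cancel_right, Nat.factorial_succ, Nat.reduceSubDiff]
      ring

end Counting

theorem center_eq_bot (hα : 3 ≤ Fintype.card α) : Subgroup.center (Perm α) = ⊥ := by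
  refine (Subgroup.eq_bot_iff_forall _).mpr fun z hz => ?_
  by_contra hz1
  obtain ⟨b, hb⟩ : ∃ b, z b ≠ b := not_forall.mp fun h => hz1 (Equiv.ext h)
  obtain ⟨c, -, hc⟩ := exists_mem_notMem_of_card_lt_card (s := {b, z b}) (t := univ)
    (card_le_two.trans_lt (by rw [card_univ]; omega))
  simp only [mem_insert, mem_singleton, not_or] at hc
  have := congr($(Subgroup.mem_center_iff.mp hz (swap b c)) b)
  simp only [coe_mul, comp_apply, swap_apply_of_ne_of_ne hb (Ne.symm hc.2), swap_apply_left,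
    EmbeddingLike.apply_eq_iff_eq] at this
  exact hc.1 this.symm

theorem _root_.MonoidHom.eq_of_alternatingGroup_le_ker {H : Type*} [Group H]
    {φ ψ : Perm α →* H} (hφ : alternatingGroup α ≤ φ.ker) (hψ : alternatingGroup α ≤ ψ.ker)
    {s : Perm α} (hs : sign s = -1) (h : φ s = ψ s) : φ = ψ := by
  ext σ
  rcases Int.units_eq_one_or (sign σ) with hσ | hσ
  · rw [MonoidHom.mem_ker.mp (hφ hσ), MonoidHom.mem_ker.mp (hψ hσ)]
  · have hmem : s⁻¹ * σ ∈ alternatingGroup α := by simp [mem_alternatingGroup, hs, hσ]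
    have map_eq (χ : Perm α →* H) (hχ : alternatingGroup α ≤ χ.ker) : χ σ = χ s := by
      have := MonoidHom.mem_ker.mp (hχ hmem)
      rwa [map_mul, map_inv, inv_mul_eq_one, eq_comm] at this
    rw [map_eq φ hφ, map_eq ψ hψ, h]

theorem card_not_injective_le_card_sq_eq_one {H : Type*} [Group H] [Finite H]
    (hα : 5 ≤ Fintype.card α) :
    Nat.card {φ : (Perm α →* H) // ¬ Injective φ} ≤ Nat.card {h : H // h ^ 2 = 1} := by
  have hker (φ : Perm α →* H) (hφ : ¬ Injective φ) : alternatingGroup α ≤ φ.ker :=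
    alternatingGroup_le_of_normal (by simpa using hα) <|
      (Subgroup.nontrivial_iff_ne_bot _).mpr (mt φ.ker_eq_bot_iff.mp hφ)
  obtain ⟨a, b, hab⟩ : ∃ a b : α, a ≠ b := Fintype.exists_pair_of_one_lt_card (by omega)
  refine Nat.card_le_card_of_injective
    (fun φ => ⟨φ.1 (swap a b), by rw [← map_pow, sq, swap_mul_self, map_one]⟩) fun φ ψ h => ?_
  exact Subtype.ext <| MonoidHom.eq_of_alternatingGroup_le_ker (hker _ φ.2) (hker _ ψ.2)
    (sign_swap hab) congr($(h).1)

theorem card_mul_card_le_card_injective (hα : 5 ≤ Fintype.card α) :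
    Fintype.card α * Nat.card (Perm α →* Perm α) ≤
      (Fintype.card α + 2) * Nat.card {φ : (Perm α →* Perm α) // Injective φ} := by
  set n := Fintype.card α
  have hsplit : Nat.card (Perm α →* Perm α) = Nat.card {φ : (Perm α →* Perm α) // Injective φ} +
      Nat.card {φ : (Perm α →* Perm α) // ¬ Injective φ} := by
    rw [← Nat.card_sum, Nat.card_congr (Equiv.sumCompl _)]
  have hinj : n.factorial ≤ Nat.card {φ : (Perm α →* Perm α) // Injective φ} := by
    simpa [Fintype.card_perm] using
      MonoidHom.card_le_card_injective_of_center_eq_bot (center_eq_bot (α := α) (by omega))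
  have hnoninj : n * Nat.card {φ : (Perm α →* Perm α) // ¬ Injective φ} ≤ 2 * n.factorial := by
    have := card_sq_eq_one_mul_card_le (α := α)
    rw [← Nat.card_eq_fintype_card] at this
    nlinarith [card_not_injective_le_card_sq_eq_one (H := Perm α) hα]
  rw [hsplit]
  nlinarith

theorem card_div_add_two_le_expectedRangeFraction (hα : 5 ≤ Fintype.card α) :
    (Fintype.card α : ℝ) / (Fintype.card α + 2) ≤ expectedRangeFraction (Perm α) := by
  refine le_trans ?_ card_injective_div_le_expectedRangeFraction
  rw [div_le_div_iff₀ (by positivity) (by simp [Nat.card_pos])]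
  exact_mod_cast (card_mul_card_le_card_injective hα).trans_eq (mul_comm _ _)

end Equiv.Perm

theorem symmetric_group_expected_image_order :
    Filter.Tendsto (fun n : ℕ =>
      (∑ᶠ φ : Equiv.Perm (Fin n) →* Equiv.Perm (Fin n), (Nat.card φ.range : ℝ)) /
        ((Nat.card (Equiv.Perm (Fin n) →* Equiv.Perm (Fin n)) : ℝ) * n.factorial))
      Filter.atTop (nhds 1) := by
  have hfraction (n : ℕ) :
      (∑ᶠ φ : Equiv.Perm (Fin n) →* Equiv.Perm (Fin n), (Nat.card φ.range : ℝ)) /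
        ((Nat.card (Equiv.Perm (Fin n) →* Equiv.Perm (Fin n)) : ℝ) * n.factorial) =
      expectedRangeFraction (Perm (Fin n)) := by
    rw [expectedRangeFraction, Nat.card_perm, Nat.card_fin]
  simp only [hfraction]
  refine tendsto_of_tendsto_of_tendsto_of_le_of_le' (tendsto_natCast_div_add_atTop (2 : ℝ))
    tendsto_const_nhds ?_ (Filter.Eventually.of_forall fun n => expectedRangeFraction_le_one)
  filter_upwards [Filter.eventually_ge_atTop 5] with n hn
  simpa using Perm.card_div_add_two_le_expectedRangeFraction (α := Fin n) (by simpa using hn)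
end

section
/- For all integers l, m ≥ 1, the number of group homomorphisms between dihedral groups satisfies Nat.card (DihedralGroup l →* DihedralGroup m) = 4 + 4m + m·gcd(l,m) if l and m are both even; = 1 + 2m + m·gcd(l,m) if l is even and m is odd; = 2 + m·gcd(l,m) if l is odd and m is even; and = 1 + m·gcd(l,m) if l and m are both odd. -/
/-!
The dihedral group `D_l` is presented by `⟨a, b | aˡ, b², (ba)²⟩` with `a = r 1`, `b = sr 0`, so
homomorphisms `D_l → D_m` are the pairs `(a, b)` of elements of `D_m` satisfying these relations.
Sort the pairs by whether `a` and `b` are rotations or reflections. For `a = r i`, `b = r j` the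
relations say `gcd(l, 2) • i = 0` and `2 • j = 0`; for `a = r i`, `b = sr j` only `l • i = 0`.
A reflection has order `2`, so `a` can be a reflection only when `l` is even; then `b = r j` needs
`2 • j = 0` and `b = sr j` needs `2 • (i - j) = 0`. In `ZMod m` the equation `k • x = 0` has
`gcd(m, k)` solutions, which turns each case into a product of gcds.
-/

lemma ZMod.card_nsmul_eq_zero (m : ℕ) [NeZero m] (k : ℕ) :
    Nat.card {x : ZMod m // k • x = 0} = m.gcd k := by
  simpa using IsAddCyclic.card_nsmulAddMonoidHom_ker (ZMod m) k

lemma Nat.card_prod_subtype_snd (α : Type*) {β : Type*} (p : β → Prop) :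
    Nat.card {c : α × β // p c.2} = Nat.card α * Nat.card {b // p b} := by
  rw [Nat.card_congr (((Equiv.prodComm α β).subtypeEquiv (p := fun c => p c.2)
    (q := fun c => p c.1) fun _ => Iff.rfl).trans Equiv.prodSubtypeFstEquivSubtypeProd),
    Nat.card_prod, mul_comm]

lemma Nat.gcd_two_right_eq_ite (n : ℕ) : n.gcd 2 = if Even n then 2 else 1 := by
  split_ifs with hn
  · exact Nat.gcd_eq_right hn.two_dvd
  · exact Nat.not_even_iff_odd.mp hn |>.coprime_two_right

section Relations

variable {G : Type*} [Group G] {n : ℕ} {a b : G}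

lemma pow_zmod_val_add [NeZero n] (ha : a ^ n = 1) (i j : ZMod n) :
    a ^ (i + j).val = a ^ i.val * a ^ j.val := by
  rw [ZMod.val_add, ← pow_eq_pow_mod _ ha, pow_add]

lemma pow_zmod_val_sub [NeZero n] (ha : a ^ n = 1) (i j : ZMod n) :
    a ^ (j - i).val = (a ^ i.val)⁻¹ * a ^ j.val := by
  rw [eq_inv_mul_iff_mul_eq, ← pow_zmod_val_add ha, add_sub_cancel]

lemma mul_pow_mul_eq_inv_pow (hb : b ^ 2 = 1) (hba : (b * a) ^ 2 = 1) (k : ℕ) :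
    b * a ^ k * b = (a ^ k)⁻¹ := by
  have hb_inv : b⁻¹ = b := inv_eq_of_mul_eq_one_right (by rw [← sq, hb])
  have hconj : b * a * b⁻¹ = a⁻¹ := by
    rw [hb_inv]
    exact eq_inv_of_mul_eq_one_left (by rw [← hba, sq, mul_assoc])
  calc b * a ^ k * b = (b * a * b⁻¹) ^ k := by rw [conj_pow, hb_inv]
    _ = (a ^ k)⁻¹ := by rw [hconj, inv_pow]

lemma pow_mul_eq_mul_inv_pow (hb : b ^ 2 = 1) (hba : (b * a) ^ 2 = 1) (k : ℕ) :
    a ^ k * b = b * (a ^ k)⁻¹ := by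
  rw [← mul_pow_mul_eq_inv_pow hb hba, ← mul_assoc, ← mul_assoc, ← sq, hb, one_mul]

variable (n) in
def SatisfiesDihedralRelations (a b : G) : Prop :=
  a ^ n = 1 ∧ b ^ 2 = 1 ∧ (b * a) ^ 2 = 1

lemma SatisfiesDihedralRelations.map {H : Type*} [Group H] (f : G →* H)
    (h : SatisfiesDihedralRelations n a b) : SatisfiesDihedralRelations n (f a) (f b) := by
  obtain ⟨ha, hb, hba⟩ := h
  exact ⟨by rw [← map_pow, ha, map_one], by rw [← map_pow, hb, map_one],
    by rw [← map_mul, ← map_pow, hba, map_one]⟩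

end Relations

namespace DihedralGroup

variable {G : Type*} [Group G] {n : ℕ}

lemma satisfiesDihedralRelations_r_one_sr_zero :
    SatisfiesDihedralRelations n (r 1 : DihedralGroup n) (sr 0) :=
  ⟨r_one_pow_n, by rw [sq, sr_mul_self], by rw [sr_mul_r, sq, sr_mul_self]⟩

def lift [NeZero n] (a b : G) (h : SatisfiesDihedralRelations n a b) : DihedralGroup n →* G :=
  MonoidHom.mk' (fun | r i => a ^ i.val | sr i => b * a ^ i.val) <| by
    obtain ⟨ha, hb, hba⟩ := h
    rintro (i | i) (j | j)
    · exact pow_zmod_val_add ha i j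
    · show b * a ^ (j - i).val = a ^ i.val * (b * a ^ j.val)
      rw [pow_zmod_val_sub ha, ← mul_assoc (a ^ i.val), pow_mul_eq_mul_inv_pow hb hba, mul_assoc]
    · show b * a ^ (i + j).val = b * a ^ i.val * a ^ j.val
      rw [pow_zmod_val_add ha, mul_assoc]
    · show a ^ (j - i).val = b * a ^ i.val * (b * a ^ j.val)
      rw [pow_zmod_val_sub ha, ← mul_assoc, mul_pow_mul_eq_inv_pow hb hba]

variable (G n) in
def homEquiv [NeZero n] :
    (DihedralGroup n →* G) ≃ {p : G × G // SatisfiesDihedralRelations n p.1 p.2} where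
  toFun f := ⟨(f (r 1), f (sr 0)), satisfiesDihedralRelations_r_one_sr_zero.map f⟩
  invFun p := lift p.1.1 p.1.2 p.2
  left_inv f := by
    ext (i | i)
    · show f (r 1) ^ i.val = f (r i)
      rw [← map_pow, r_one_pow, ZMod.natCast_zmod_val]
    · show f (sr 0) * f (r 1) ^ i.val = f (sr i)
      rw [← map_pow, r_one_pow, ZMod.natCast_zmod_val, ← map_mul, sr_mul_r, zero_add]
  right_inv := by
    rintro ⟨⟨a, b⟩, ha, hb, hba⟩
    ext
    · show a ^ (1 : ZMod n).val = a
      rw [ZMod.val_one_eq_one_mod, ← pow_eq_pow_mod _ ha, pow_one]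
    · show b * a ^ (0 : ZMod n).val = b
      rw [ZMod.val_zero, pow_zero, mul_one]

variable {m l : ℕ}

lemma r_pow_eq_one_iff (i : ZMod m) (k : ℕ) : (r i : DihedralGroup m) ^ k = 1 ↔ k • i = 0 := by
  rw [r_pow, one_def, r.injEq, nsmul_eq_mul, mul_comm]

lemma sr_pow_eq_one_iff (i : ZMod m) (k : ℕ) : (sr i : DihedralGroup m) ^ k = 1 ↔ Even k := by
  rw [← orderOf_dvd_iff_pow_eq_one, orderOf_sr, even_iff_two_dvd]

lemma satisfiesDihedralRelations_r_r (i j : ZMod m) :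
    SatisfiesDihedralRelations l (r i) (r j) ↔ l.gcd 2 • i = 0 ∧ 2 • j = 0 := by
  simp only [SatisfiesDihedralRelations, r_mul_r, r_pow_eq_one_iff, gcd_nsmul_eq_zero, nsmul_add]
  constructor
  · rintro ⟨hl, hj, hji⟩
    exact ⟨⟨hl, by rwa [hj, zero_add] at hji⟩, hj⟩
  · rintro ⟨⟨hl, hi⟩, hj⟩
    exact ⟨hl, hj, by rw [hi, hj, add_zero]⟩

lemma satisfiesDihedralRelations_r_sr (i j : ZMod m) :
    SatisfiesDihedralRelations l (r i) (sr j) ↔ l • i = 0 := by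
  simp only [SatisfiesDihedralRelations, sr_mul_r, r_pow_eq_one_iff, sr_pow_eq_one_iff, even_two,
    and_self, and_true]

lemma satisfiesDihedralRelations_sr_r (i j : ZMod m) :
    SatisfiesDihedralRelations l (sr i) (r j) ↔ Even l ∧ 2 • j = 0 := by
  simp only [SatisfiesDihedralRelations, r_mul_sr, r_pow_eq_one_iff, sr_pow_eq_one_iff, even_two,
    and_true]

lemma satisfiesDihedralRelations_sr_sr (i j : ZMod m) :
    SatisfiesDihedralRelations l (sr i) (sr j) ↔ Even l ∧ 2 • (i - j) = 0 := by
  simp only [SatisfiesDihedralRelations, sr_mul_sr, r_pow_eq_one_iff, sr_pow_eq_one_iff, even_two,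
    true_and]

section Counting

variable [NeZero m]

lemma card_subtype_prod (Q : DihedralGroup m → DihedralGroup m → Prop) :
    Nat.card {p : DihedralGroup m × DihedralGroup m // Q p.1 p.2} =
      Nat.card {q : ZMod m × ZMod m // Q (r q.1) (r q.2)} +
      Nat.card {q : ZMod m × ZMod m // Q (r q.1) (sr q.2)} +
      (Nat.card {q : ZMod m × ZMod m // Q (sr q.1) (r q.2)} +
      Nat.card {q : ZMod m × ZMod m // Q (sr q.1) (sr q.2)}) := by
  let e : DihedralGroup m × DihedralGroup m ≃
      (ZMod m × ZMod m ⊕ ZMod m × ZMod m) ⊕ (ZMod m × ZMod m ⊕ ZMod m × ZMod m) :=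
    (equivSum.prodCongr equivSum).trans <| (Equiv.sumProdDistrib _ _ _).trans <|
      Equiv.sumCongr (Equiv.prodSumDistrib _ _ _) (Equiv.prodSumDistrib _ _ _)
  rw [Nat.card_congr (e.subtypeEquivOfSubtype'.trans <|
    Equiv.subtypeSum.trans (Equiv.sumCongr Equiv.subtypeSum Equiv.subtypeSum))]
  simp only [Nat.card_sum]
  rfl

lemma card_satisfiesDihedralRelations_r_r :
    Nat.card {q : ZMod m × ZMod m // SatisfiesDihedralRelations l (r q.1) (r q.2)} =
      m.gcd (l.gcd 2) * m.gcd 2 := by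
  simp only [satisfiesDihedralRelations_r_r]
  rw [Nat.card_congr (Equiv.subtypeProdEquivProd (p := (l.gcd 2 • · = (0 : ZMod m)))
    (q := (2 • · = (0 : ZMod m)))), Nat.card_prod, ZMod.card_nsmul_eq_zero,
    ZMod.card_nsmul_eq_zero]

lemma card_satisfiesDihedralRelations_r_sr :
    Nat.card {q : ZMod m × ZMod m // SatisfiesDihedralRelations l (r q.1) (sr q.2)} =
      m.gcd l * m := by
  simp only [satisfiesDihedralRelations_r_sr]
  rw [Nat.card_congr (Equiv.prodSubtypeFstEquivSubtypeProd (p := (l • · = (0 : ZMod m)))),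
    Nat.card_prod, ZMod.card_nsmul_eq_zero, Nat.card_zmod]

lemma card_satisfiesDihedralRelations_sr_r :
    Nat.card {q : ZMod m × ZMod m // SatisfiesDihedralRelations l (sr q.1) (r q.2)} =
      if Even l then m * m.gcd 2 else 0 := by
  simp only [satisfiesDihedralRelations_sr_r]
  split_ifs with hl
  · simp only [hl, true_and]
    rw [Nat.card_prod_subtype_snd _ (2 • · = (0 : ZMod m)), Nat.card_zmod, ZMod.card_nsmul_eq_zero]
  · simp [hl]

lemma card_satisfiesDihedralRelations_sr_sr :
    Nat.card {q : ZMod m × ZMod m // SatisfiesDihedralRelations l (sr q.1) (sr q.2)} =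
      if Even l then m * m.gcd 2 else 0 := by
  simp only [satisfiesDihedralRelations_sr_sr]
  split_ifs with hl
  · simp only [hl, true_and]
    let shear : ZMod m × ZMod m ≃ ZMod m × ZMod m := Equiv.prodShear (Equiv.refl _) Equiv.subLeft
    rw [Nat.card_congr (shear.subtypeEquiv (p := fun c => 2 • (c.1 - c.2) = 0)
      (q := fun c => 2 • c.2 = 0) fun _ => Iff.rfl),
      Nat.card_prod_subtype_snd _ (2 • · = (0 : ZMod m)), Nat.card_zmod, ZMod.card_nsmul_eq_zero]
  · simp [hl]

lemma card_satisfiesDihedralRelations :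
    Nat.card {p : DihedralGroup m × DihedralGroup m // SatisfiesDihedralRelations l p.1 p.2} =
      m.gcd (l.gcd 2) * m.gcd 2 + m.gcd l * m + if Even l then 2 * m * m.gcd 2 else 0 := by
  rw [card_subtype_prod, card_satisfiesDihedralRelations_r_r, card_satisfiesDihedralRelations_r_sr,
    card_satisfiesDihedralRelations_sr_r, card_satisfiesDihedralRelations_sr_sr]
  split_ifs <;> ring

end Counting

end DihedralGroup

theorem hom_dihedral_to_dihedral_count (l m : ℕ) (hl : 1 ≤ l) (hm : 1 ≤ m) :
    Nat.card (DihedralGroup l →* DihedralGroup m) =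
      if Even l then
        (if Even m then 4 + 4 * m + m * Nat.gcd l m else 1 + 2 * m + m * Nat.gcd l m)
      else
        (if Even m then 2 + m * Nat.gcd l m else 1 + m * Nat.gcd l m) := by
  have : NeZero l := ⟨by omega⟩
  have : NeZero m := ⟨by omega⟩
  rw [Nat.card_congr (DihedralGroup.homEquiv _ l), DihedralGroup.card_satisfiesDihedralRelations,
    Nat.gcd_comm m l]
  by_cases l_even : Even l <;> by_cases m_even : Even m <;>
    simp only [l_even, m_even, Nat.gcd_two_right_eq_ite, if_true, if_false, Nat.gcd_one_right] <;>
    ring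
end
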